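/- arXiv:2307.03431 — 6 statements merged into one kernel-verified Lean document; each statement's English description precedes it below -/
import Mathlib

section
/- Let r ∈ ℝ³ with ‖r‖ < 1 and set ρ := (1/2)(I + r·σ), a strictly positive 2×2 density matrix. For x ∈ ℝ³ define λ := (x·r)/(1−‖r‖²) and ℓ := x + λ r. Then the Hermitian matrix L := ℓ·σ − λ I satisfies ρ∘L = (1/2) x·σ and Tr(ρL) = 0; that is, L is the SLD of the tangent vector represented by (1/2)x·σ at ρ. -/
open Matrix
open scoped ComplexOrder

noncomputable section

/-- The symmetrized (Jordan) product `A∘B := (AB+BA)/2`. -/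
def jprod (A B : Matrix (Fin 2) (Fin 2) ℂ) : Matrix (Fin 2) (Fin 2) ℂ :=
  (1/2 : ℂ) • (A * B + B * A)

/-- The Pauli matrices. -/
def pauli : Fin 3 → Matrix (Fin 2) (Fin 2) ℂ
  | 0 => !![0, 1; 1, 0]
  | 1 => !![0, -Complex.I; Complex.I, 0]
  | 2 => !![1, 0; 0, -1]

/-- `a·σ` for `a ∈ ℝ³`. -/
def dotSigma (a : Fin 3 → ℝ) : Matrix (Fin 2) (Fin 2) ℂ := ∑ i, a i • pauli i

/-!
The Pauli matrices anticommute, so `(a·σ)∘(b·σ) = (a·b) I`. Expanding `ρ∘L` with this gives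
`½ ((ℓ - λ r)·σ + (r·ℓ - λ) I)`, and `λ` is exactly the value that kills the scalar part; then
`Tr(ρL) = Tr(ρ∘L) = ½ Tr(x·σ) = 0`. For positivity, `A := r·σ` satisfies `A² = ‖r‖² I`, hence
`2 (I + A) = (I + A)ᴴ (I + A) + (1 - ‖r‖²) I`.
-/

theorem Matrix.posDef_one_add_of_mul_self_eq_smul {n 𝕜 : Type*} [Fintype n] [DecidableEq n]
    [RCLike 𝕜] {A : Matrix n n 𝕜} (hA : A.IsHermitian) {s : ℝ} (hAA : A * A = s • 1)
    (hs : s < 1) : (1 + A).PosDef := by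
  have hdecomp : 1 + A = (1 / 2 : ℝ) • ((1 - s) • (1 : Matrix n n 𝕜) + (1 + A)ᴴ * (1 + A)) := by
    simp only [conjTranspose_add, conjTranspose_one, hA.eq, add_mul, mul_add, hAA, one_mul, mul_one]
    module
  rw [hdecomp]
  exact ((PosDef.one.smul (sub_pos.2 hs)).add_posSemidef
    (posSemidef_conjTranspose_mul_self _)).smul (by norm_num)

theorem dotSigma_eq_fin_two (a : Fin 3 → ℝ) :
    dotSigma a = !![(a 2 : ℂ), a 0 - a 1 * Complex.I; a 0 + a 1 * Complex.I, -(a 2 : ℂ)] := by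
  ext i j
  fin_cases i <;> fin_cases j <;> simp [dotSigma, pauli, Fin.sum_univ_three]
  ring

theorem dotSigma_smul (c : ℝ) (a : Fin 3 → ℝ) : dotSigma (c • a) = c • dotSigma a := by
  simp only [dotSigma, Pi.smul_apply, smul_eq_mul, mul_smul, Finset.smul_sum]

theorem dotSigma_sub (a b : Fin 3 → ℝ) : dotSigma (a - b) = dotSigma a - dotSigma b := by
  simp only [dotSigma, Pi.sub_apply, sub_smul, Finset.sum_sub_distrib]

theorem isHermitian_pauli (i : Fin 3) : (pauli i).IsHermitian := by
  fin_cases i <;> ext j k <;> fin_cases j <;> fin_cases k <;> simp [pauli]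

theorem isHermitian_dotSigma (a : Fin 3 → ℝ) : (dotSigma a).IsHermitian :=
  isSelfAdjoint_sum _ fun i _ => (isHermitian_pauli i).smul (IsSelfAdjoint.all (a i))

theorem trace_dotSigma (a : Fin 3 → ℝ) : (dotSigma a).trace = 0 := by
  simp [dotSigma_eq_fin_two, trace_fin_two]

theorem dotSigma_mul_add_mul_swap (a b : Fin 3 → ℝ) :
    dotSigma a * dotSigma b + dotSigma b * dotSigma a = (2 * (a ⬝ᵥ b)) • 1 := by
  rw [dotSigma_eq_fin_two, dotSigma_eq_fin_two]
  ext i j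
  fin_cases i <;> fin_cases j <;> simp [dotProduct, Fin.sum_univ_three, Complex.ext_iff] <;>
    constructor <;> ring

theorem dotSigma_mul_self (a : Fin 3 → ℝ) : dotSigma a * dotSigma a = (a ⬝ᵥ a) • 1 := by
  have h := dotSigma_mul_add_mul_swap a a
  rw [← two_smul ℝ, mul_smul] at h
  exact smul_right_injective _ two_ne_zero h

theorem trace_jprod (A B : Matrix (Fin 2) (Fin 2) ℂ) : (jprod A B).trace = (A * B).trace := by
  rw [jprod, trace_smul, trace_add, trace_mul_comm B A, ← two_mul, smul_eq_mul, ← mul_assoc]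
  norm_num

theorem jprod_half_smul_one_add_dotSigma (r l : Fin 3 → ℝ) (c : ℝ) :
    jprod ((1 / 2 : ℝ) • (1 + dotSigma r)) (dotSigma l - c • 1) =
      (1 / 2 : ℝ) • (dotSigma (l - c • r) + (r ⬝ᵥ l - c) • 1) := by
  have hswap : dotSigma l * dotSigma r = (2 * (r ⬝ᵥ l)) • 1 - dotSigma r * dotSigma l :=
    eq_sub_of_add_eq' (dotSigma_mul_add_mul_swap r l)
  simp only [jprod, dotSigma_sub, dotSigma_smul, smul_mul_assoc, mul_smul_comm, add_mul, mul_add,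
    sub_mul, mul_sub, one_mul, mul_one, hswap]
  module

theorem posDef_half_smul_one_add_dotSigma {r : Fin 3 → ℝ} (hr : r ⬝ᵥ r < 1) :
    ((1 / 2 : ℝ) • (1 + dotSigma r)).PosDef :=
  (posDef_one_add_of_mul_self_eq_smul (isHermitian_dotSigma r) (dotSigma_mul_self r) hr).smul
    (by norm_num)

theorem trace_half_smul_one_add_dotSigma (r : Fin 3 → ℝ) :
    ((1 / 2 : ℝ) • (1 + dotSigma r)).trace = 1 := by
  simp [trace_dotSigma]

/-- For `‖r‖ < 1` and `ρ := (1/2)(I + r·σ)` (a strictly positive density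
matrix), and for `x ∈ ℝ³`, with `λ := (x·r)/(1−‖r‖²)` and `ℓ := x + λ r`, the Hermitian
matrix `L := ℓ·σ − λ I` satisfies `ρ∘L = (1/2) x·σ` and `Tr(ρL) = 0`. -/
theorem qubit_sld_formula (r : Fin 3 → ℝ) (hr : r ⬝ᵥ r < 1) (x : Fin 3 → ℝ) :
    (((1 : ℝ)/2) • ((1 : Matrix (Fin 2) (Fin 2) ℂ) + dotSigma r)).PosDef ∧
    (((1 : ℝ)/2) • ((1 : Matrix (Fin 2) (Fin 2) ℂ) + dotSigma r)).trace = 1 ∧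
    (dotSigma (x + ((x ⬝ᵥ r) / (1 - r ⬝ᵥ r)) • r)
      - (((x ⬝ᵥ r) / (1 - r ⬝ᵥ r)) : ℝ) • (1 : Matrix (Fin 2) (Fin 2) ℂ)).IsHermitian ∧
    jprod (((1 : ℝ)/2) • ((1 : Matrix (Fin 2) (Fin 2) ℂ) + dotSigma r))
        (dotSigma (x + ((x ⬝ᵥ r) / (1 - r ⬝ᵥ r)) • r)
          - (((x ⬝ᵥ r) / (1 - r ⬝ᵥ r)) : ℝ) • (1 : Matrix (Fin 2) (Fin 2) ℂ))
      = ((1 : ℝ)/2) • dotSigma x ∧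
    ((((1 : ℝ)/2) • ((1 : Matrix (Fin 2) (Fin 2) ℂ) + dotSigma r)) *
        (dotSigma (x + ((x ⬝ᵥ r) / (1 - r ⬝ᵥ r)) • r)
          - (((x ⬝ᵥ r) / (1 - r ⬝ᵥ r)) : ℝ) • (1 : Matrix (Fin 2) (Fin 2) ℂ))).trace = 0 := by
  set c := (x ⬝ᵥ r) / (1 - r ⬝ᵥ r) with hc_def
  have hc : r ⬝ᵥ (x + c • r) - c = 0 := by
    rw [dotProduct_add, dotProduct_smul, smul_eq_mul, dotProduct_comm, hc_def]
    field_simp [(sub_pos.2 hr).ne']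
    ring
  have hjordan : jprod ((1 / 2 : ℝ) • (1 + dotSigma r)) (dotSigma (x + c • r) - c • 1) =
      (1 / 2 : ℝ) • dotSigma x := by
    rw [jprod_half_smul_one_add_dotSigma, add_sub_cancel_right, hc, zero_smul, add_zero]
  refine ⟨posDef_half_smul_one_add_dotSigma hr, trace_half_smul_one_add_dotSigma r,
    (isHermitian_dotSigma _).sub (isHermitian_one.smul (IsSelfAdjoint.all c)), hjordan, ?_⟩
  rw [← trace_jprod, hjordan, trace_smul, trace_dotSigma, smul_zero]
end
end

section
/- Let ρ be a strictly positive 2×2 density matrix and let A, B be Hermitian 2×2 complex matrices. Then (1/2)[[A,B],ρ] = (Tr A − 2 Tr(ρA))·(ρ∘B) − (Tr B − 2 Tr(ρB))·(ρ∘A) + ((Tr B)·Tr(ρA) − (Tr A)·Tr(ρB))·ρ, where [X,Y] := XY − YX is the commutator. -/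
open Matrix
open scoped ComplexOrder

noncomputable section

/-- The commutator `[X,Y] := XY − YX`. -/
def mcomm (X Y : Matrix (Fin 2) (Fin 2) ℂ) : Matrix (Fin 2) (Fin 2) ℂ := X * Y - Y * X

/-! Multiplying its terms of degree one in `ρ` by `tr ρ = 1` makes the identity homogeneous of
degree two in `ρ`. In that form it is a polynomial identity in the entries of `ρ`, `A`, `B`, valid for
`2 × 2` matrices over any commutative ring, and it is checked entrywise. -/

theorem Matrix.trace_smul_commutator_commutator_fin_two {R : Type*} [CommRing R]
    (ρ A B : Matrix (Fin 2) (Fin 2) R) :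
    ρ.trace • ((A * B - B * A) * ρ - ρ * (A * B - B * A)) =
      (A.trace * ρ.trace - 2 * (ρ * A).trace) • (ρ * B + B * ρ)
        - (B.trace * ρ.trace - 2 * (ρ * B).trace) • (ρ * A + A * ρ)
        + (2 * (B.trace * (ρ * A).trace - A.trace * (ρ * B).trace)) • ρ := by
  ext i j
  fin_cases i <;> fin_cases j <;>
    simp only [Fin.zero_eta, Fin.mk_one, Fin.isValue, trace_fin_two, smul_apply, sub_apply,
      add_apply, mul_apply, Fin.sum_univ_two, smul_eq_mul] <;> ring

theorem qubit_torsion_identity_general (ρ A B : Matrix (Fin 2) (Fin 2) ℂ)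
    (hρtr : ρ.trace = 1) :
    (1/2 : ℂ) • mcomm (mcomm A B) ρ =
      (A.trace - 2 * (ρ * A).trace) • jprod ρ B
        - (B.trace - 2 * (ρ * B).trace) • jprod ρ A
        + (B.trace * (ρ * A).trace - A.trace * (ρ * B).trace) • ρ := by
  have h := Matrix.trace_smul_commutator_commutator_fin_two ρ A B
  rw [hρtr, one_smul, mul_one, mul_one] at h
  rw [mcomm, mcomm, h, jprod, jprod]
  module

/-- For a strictly positive 2×2 density matrix `ρ` and Hermitian `A`, `B`:
`(1/2)[[A,B],ρ] = (Tr A − 2Tr(ρA))·(ρ∘B) − (Tr B − 2Tr(ρB))·(ρ∘A)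
 + ((Tr B)Tr(ρA) − (Tr A)Tr(ρB))·ρ`. -/
theorem qubit_torsion_identity (ρ A B : Matrix (Fin 2) (Fin 2) ℂ)
    (hρpos : ρ.PosDef) (hρtr : ρ.trace = 1)
    (hA : A.IsHermitian) (hB : B.IsHermitian) :
    (1/2 : ℂ) • mcomm (mcomm A B) ρ =
      (A.trace - 2 * (ρ * A).trace) • jprod ρ B
        - (B.trace - 2 * (ρ * B).trace) • jprod ρ A
        + (B.trace * (ρ * A).trace - A.trace * (ρ * B).trace) • ρ :=
  qubit_torsion_identity_general ρ A B hρtr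
end
end

section
/- Let ρ be a strictly positive 2×2 density matrix and let A, B be Hermitian 2×2 complex matrices satisfying Tr(ρA) = 0 and Tr(ρB) = 0. Then [[A,B],ρ] lies in the real span of ρ∘A and ρ∘B; explicitly, [[A,B],ρ] = 2(Tr A)·(ρ∘B) − 2(Tr B)·(ρ∘A), where [X,Y] := XY − YX. -/
/-!
With `{X, Y} := XY + YX`, every ring satisfies `[[a, b], r] = {a, {b, r}} - {b, {a, r}}`. For 2×2
matrices, polarizing Cayley–Hamilton gives
`{X, Y} = (Tr X) Y + (Tr Y) X + (Tr (XY) - Tr X Tr Y) 1`, so `Tr ρ = 1` and `Tr (ρX) = 0` force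
`{ρ, X} = X + (Tr X)(ρ - 1)`. Substituting this for `X = A, B` into the ring identity expresses
`[[A, B], ρ]` through `{ρ, A}` and `{ρ, B}`, and the coefficients `2 Tr A`, `-2 Tr B` are real
because `A`, `B` are Hermitian.
-/

open Matrix
open scoped ComplexOrder

noncomputable section

theorem commutator_commutator_eq_of_anticommutator {R M : Type*} [CommRing R] [Ring M]
    [Algebra R M] {a b r : M} {α β : R}
    (ha : r * a + a * r = a + α • (r - 1)) (hb : r * b + b * r = b + β • (r - 1)) :
    (a * b - b * a) * r - r * (a * b - b * a) = α • (r * b + b * r) - β • (r * a + a * r) := by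
  set Ea := r * a + a * r - a - α • (r - 1) with hEa_def
  set Eb := r * b + b * r - b - β • (r - 1) with hEb_def
  have hEa : Ea = 0 := by rw [hEa_def, ha]; abel
  have hEb : Eb = 0 := by rw [hEb_def, hb]; abel
  rw [← sub_eq_zero]
  calc _ = a * Eb + Eb * a - b * Ea - Ea * b + (2 * β) • Ea - (2 * α) • Eb := by
        simp only [Ea, Eb, mul_sub, sub_mul, mul_add, add_mul, mul_smul_comm, smul_mul_assoc,
          mul_one, one_mul, mul_assoc, smul_sub, smul_add]
        module
    _ = 0 := by simp [hEa, hEb]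

namespace Matrix

variable {R : Type*} [CommRing R]

theorem anticommutator_fin_two (X Y : Matrix (Fin 2) (Fin 2) R) :
    X * Y + Y * X = trace X • Y + trace Y • X + (trace (X * Y) - trace X * trace Y) • 1 := by
  ext i j
  fin_cases i <;> fin_cases j <;>
    simp [mul_apply, trace_fin_two, Fin.sum_univ_two] <;> ring

theorem anticommutator_fin_two_of_trace_eq_one {ρ X : Matrix (Fin 2) (Fin 2) R}
    (hρ : trace ρ = 1) (hX : trace (ρ * X) = 0) :
    ρ * X + X * ρ = X + trace X • (ρ - 1) := by
  rw [anticommutator_fin_two, hρ, hX, one_smul, smul_sub]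
  module

end Matrix

theorem Matrix.IsHermitian.ofReal_re_trace {n : Type*} [Fintype n]
    {A : Matrix n n ℂ} (hA : A.IsHermitian) : ((A.trace.re : ℝ) : ℂ) = A.trace :=
  Complex.conj_eq_iff_re.mp (by rw [← Complex.star_def, ← trace_conjTranspose, hA.eq])

theorem two_smul_jprod (A B : Matrix (Fin 2) (Fin 2) ℂ) : (2 : ℂ) • jprod A B = A * B + B * A := by
  rw [jprod, smul_smul]
  norm_num

theorem qubit_torsion_in_span_general (ρ A B : Matrix (Fin 2) (Fin 2) ℂ)
    (hρtr : ρ.trace = 1)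
    (hA : A.IsHermitian) (hB : B.IsHermitian)
    (hA0 : (ρ * A).trace = 0) (hB0 : (ρ * B).trace = 0) :
    mcomm (mcomm A B) ρ ∈
      Submodule.span ℝ ({jprod ρ A, jprod ρ B} : Set (Matrix (Fin 2) (Fin 2) ℂ)) ∧
    mcomm (mcomm A B) ρ = (2 * A.trace) • jprod ρ B - (2 * B.trace) • jprod ρ A := by
  have heq : mcomm (mcomm A B) ρ = (2 * A.trace) • jprod ρ B - (2 * B.trace) • jprod ρ A := by
    rw [mul_comm (2 : ℂ), mul_comm (2 : ℂ), ← smul_smul, ← smul_smul, two_smul_jprod,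
      two_smul_jprod]
    exact commutator_commutator_eq_of_anticommutator
      (anticommutator_fin_two_of_trace_eq_one hρtr hA0)
      (anticommutator_fin_two_of_trace_eq_one hρtr hB0)
  refine ⟨Submodule.mem_span_pair.mpr ⟨-(2 * B.trace.re), 2 * A.trace.re, ?_⟩, heq⟩
  simp only [heq, ← Complex.coe_smul, Complex.ofReal_neg, Complex.ofReal_mul,
    Complex.ofReal_ofNat, hA.ofReal_re_trace, hB.ofReal_re_trace]
  module

/-- For a strictly positive 2×2 density matrix `ρ` and Hermitian `A`, `B`
with `Tr(ρA) = Tr(ρB) = 0`, the matrix `[[A,B],ρ]` lies in the real span of `ρ∘A`, `ρ∘B`;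
explicitly `[[A,B],ρ] = 2(Tr A)·(ρ∘B) − 2(Tr B)·(ρ∘A)`. -/
theorem qubit_torsion_in_span (ρ A B : Matrix (Fin 2) (Fin 2) ℂ)
    (hρpos : ρ.PosDef) (hρtr : ρ.trace = 1)
    (hA : A.IsHermitian) (hB : B.IsHermitian)
    (hA0 : (ρ * A).trace = 0) (hB0 : (ρ * B).trace = 0) :
    mcomm (mcomm A B) ρ ∈
      Submodule.span ℝ ({jprod ρ A, jprod ρ B} : Set (Matrix (Fin 2) (Fin 2) ℂ)) ∧
    mcomm (mcomm A B) ρ = (2 * A.trace) • jprod ρ B - (2 * B.trace) • jprod ρ A :=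
  qubit_torsion_in_span_general ρ A B hρtr hA hB hA0 hB0
end
end

section
/- Let ρ be a strictly positive 2×2 density matrix (with complex entries) and let A, B be 2×2 real symmetric matrices (regarded as complex matrices). Then there exists a 2×2 real symmetric matrix C such that [[A,B],ρ] = ρ∘C, where [X,Y] := XY − YX. -/
/-!
The commutator `K = [A, B]` of two real symmetric matrices is real antisymmetric, so
`M = [K, ρ]` is Hermitian; it is also symmetric, because `ρ - ρᵀ` is antisymmetric and in
dimension two all antisymmetric matrices commute (they are multiples of `!![0, 1; -1, 0]`).
Hence `M` is real symmetric. By Cayley–Hamilton and `tr ρ = 1`, `ρ² = ρ - (det ρ) 1`, which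
gives `ρ M + M ρ = K ρ² - ρ² K = M`, i.e. `M = ρ ∘ (2 M)`.
-/

open Matrix
open scoped ComplexOrder

noncomputable section

/-- A real symmetric matrix: a Hermitian matrix all of whose entries are real. -/
def IsRealSymm {d : ℕ} (A : Matrix (Fin d) (Fin d) ℂ) : Prop :=
  A.IsHermitian ∧ ∀ i j, (A i j).im = 0

theorem mul_commutator_add_commutator_mul_of_mul_self_eq {R : Type*} [Ring R] {K ρ c : R}
    (hc : Commute K c) (hρ : ρ * ρ = ρ - c) :
    ρ * (K * ρ - ρ * K) + (K * ρ - ρ * K) * ρ = K * ρ - ρ * K :=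
  calc ρ * (K * ρ - ρ * K) + (K * ρ - ρ * K) * ρ = K * (ρ * ρ) - (ρ * ρ) * K := by noncomm_ring
    _ = K * ρ - ρ * K := by rw [hρ, mul_sub, sub_mul, hc.eq]; abel

theorem IsSelfAdjoint.commutator_of_star_eq_neg {R : Type*} [Ring R] [StarRing R] {K ρ : R}
    (hK : star K = -K) (hρ : IsSelfAdjoint ρ) : IsSelfAdjoint (K * ρ - ρ * K) := by
  simp only [IsSelfAdjoint, star_sub, star_mul, hK, hρ.star_eq, mul_neg, neg_mul, sub_neg_eq_add]
  abel

namespace Matrix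

theorem mul_self_fin_two {R : Type*} [CommRing R] (M : Matrix (Fin 2) (Fin 2) R) :
    M * M = M.trace • M - M.det • 1 := by
  ext i j
  fin_cases i <;> fin_cases j <;>
    simp [mul_apply, trace_fin_two, det_fin_two] <;> ring

theorem commute_of_transpose_eq_neg_fin_two {R : Type*} [CommRing R] [IsAddTorsionFree R]
    {K L : Matrix (Fin 2) (Fin 2) R} (hK : Kᵀ = -K) (hL : Lᵀ = -L) : Commute K L := by
  have skew {N : Matrix (Fin 2) (Fin 2) R} (hN : Nᵀ = -N) :
      N = !![0, N 0 1; -N 0 1, 0] := by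
    have h i j : N j i = -N i j := congr_fun₂ hN i j
    ext i j
    fin_cases i <;> fin_cases j <;> simp [self_eq_neg.1 (h 0 0), self_eq_neg.1 (h 1 1), h 0 1]
  rw [skew hK, skew hL, Commute, SemiconjBy]
  ext i j
  fin_cases i <;> fin_cases j <;> simp <;> ring

theorem IsSymm.commutator_of_transpose_eq_neg {n R : Type*} [Fintype n] [CommRing R]
    {K ρ : Matrix n n R} (hK : Kᵀ = -K) (hcomm : Commute K (ρ - ρᵀ)) :
    (K * ρ - ρ * K).IsSymm := by
  have h : K * ρ - ρ * K = K * ρᵀ - ρᵀ * K := by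
    simpa only [mul_sub, sub_mul, sub_eq_sub_iff_sub_eq_sub] using hcomm.eq
  rw [IsSymm, transpose_sub, transpose_mul, transpose_mul, hK, mul_neg, neg_mul, h]
  abel

end Matrix

theorem isRealSymm_iff {d : ℕ} {A : Matrix (Fin d) (Fin d) ℂ} :
    IsRealSymm A ↔ A.IsHermitian ∧ A.IsSymm := by
  refine ⟨fun ⟨hH, hre⟩ => ⟨hH, IsSymm.ext fun i j => ?_⟩, fun ⟨hH, hS⟩ => ⟨hH, fun i j => ?_⟩⟩
  · rw [← hH.apply i j, Complex.star_def, Complex.conj_eq_iff_im.2 (hre j i)]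
  · rw [← Complex.conj_eq_iff_im, ← Complex.star_def, hH.apply, hS.apply]

/-- For a strictly positive 2×2 density matrix `ρ` and real symmetric
`A`, `B`, there is a real symmetric `C` with `[[A,B],ρ] = ρ∘C`. -/
theorem qubit_real_involutive (ρ A B : Matrix (Fin 2) (Fin 2) ℂ)
    (hρpos : ρ.PosDef) (hρtr : ρ.trace = 1)
    (hA : IsRealSymm A) (hB : IsRealSymm B) :
    ∃ C : Matrix (Fin 2) (Fin 2) ℂ, IsRealSymm C ∧ mcomm (mcomm A B) ρ = jprod ρ C := by
  obtain ⟨hAH, hAS⟩ := isRealSymm_iff.1 hA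
  obtain ⟨hBH, hBS⟩ := isRealSymm_iff.1 hB
  set K := mcomm A B
  have hKT : Kᵀ = -K := by
    simp only [K, mcomm, transpose_sub, transpose_mul, hAS.eq, hBS.eq, neg_sub]
  have hKH : star K = -K := by
    simp only [K, mcomm, star_sub, star_mul, hAH.star_eq, hBH.star_eq, neg_sub]
  have hMH : (mcomm K ρ).IsHermitian := IsSelfAdjoint.commutator_of_star_eq_neg hKH hρpos.1
  have hMS : (mcomm K ρ).IsSymm := IsSymm.commutator_of_transpose_eq_neg hKT
    (commute_of_transpose_eq_neg_fin_two hKT (by rw [transpose_sub, transpose_transpose, neg_sub]))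
  have hρsq : ρ * ρ = ρ - ρ.det • 1 := by rw [mul_self_fin_two, hρtr, one_smul]
  refine ⟨mcomm K ρ + mcomm K ρ, isRealSymm_iff.2 ⟨hMH.add hMH, hMS.add hMS⟩, ?_⟩
  rw [jprod, mul_add, add_mul, add_add_add_comm, ← two_smul ℂ, smul_smul, mcomm,
    mul_commutator_add_commutator_mul_of_mul_self_eq ((Commute.one_right K).smul_right _) hρsq]
  norm_num
end
end

section
/- For any two Hermitian 2×2 complex matrices A and B there exists a 2×2 unitary matrix U such that both U*AU and U*BU have all real entries (hence are real symmetric matrices). -/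
/-!
Diagonalize `A` by a unitary `V`. Conjugating further by a diagonal unitary `diag(1, c)` keeps
`Vᴴ A V` real diagonal and multiplies the off-diagonal entry `w` of `Vᴴ B V` by the phase `c`,
which can be chosen so that `w c` is real. A Hermitian `2 × 2` matrix whose off-diagonal entry
is real has only real entries.
-/

open Matrix Complex

theorem Matrix.IsHermitian.exists_unitary_conjTranspose_mul_mul_eq_diagonal {n 𝕜 : Type*}
    [Fintype n] [DecidableEq n] [RCLike 𝕜] {A : Matrix n n 𝕜} (hA : A.IsHermitian) :
    ∃ V ∈ unitaryGroup n 𝕜, Vᴴ * A * V = diagonal (RCLike.ofReal ∘ hA.eigenvalues) := by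
  refine ⟨hA.eigenvectorUnitary, hA.eigenvectorUnitary.2, ?_⟩
  simpa [← star_eq_conjTranspose] using hA.conjStarAlgAut_star_eigenvectorUnitary

theorem Matrix.diagonal_mem_unitaryGroup {n α : Type*} [Fintype n] [DecidableEq n]
    [CommRing α] [StarRing α] {d : n → α} (hd : ∀ i, d i ∈ unitary α) :
    diagonal d ∈ unitaryGroup n α := by
  rw [mem_unitaryGroup_iff', star_eq_conjTranspose, diagonal_conjTranspose,
    diagonal_mul_diagonal, ← diagonal_one]
  exact congrArg diagonal (funext fun i => Unitary.star_mul_self_of_mem (hd i))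

theorem Matrix.conjTranspose_diagonal_mul_mul_diagonal_apply {n α : Type*} [Fintype n]
    [DecidableEq n] [Semiring α] [StarRing α] (d : n → α) (M : Matrix n n α) (i j : n) :
    ((diagonal d)ᴴ * M * diagonal d) i j = star (d i) * M i j * d j := by
  rw [mul_diagonal, diagonal_conjTranspose, diagonal_mul, Pi.star_apply]

theorem Complex.exists_mem_unitary_im_mul_eq_zero (w : ℂ) :
    ∃ c ∈ unitary ℂ, (w * c).im = 0 := by
  refine ⟨exp (-(arg w * I)), ?_, ?_⟩
  · rw [Unitary.mem_iff_star_mul_self, star_def, ← exp_conj, ← exp_add]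
    simp
  · nth_rewrite 1 [← norm_mul_exp_arg_mul_I w]
    rw [mul_assoc, ← exp_add, add_neg_cancel, exp_zero, mul_one, ofReal_im]

theorem Matrix.IsHermitian.im_apply_eq_zero_of_im_apply_zero_one {M : Matrix (Fin 2) (Fin 2) ℂ}
    (hM : M.IsHermitian) (h01 : (M 0 1).im = 0) (i j : Fin 2) : (M i j).im = 0 := by
  have hdiag (k : Fin 2) : (M k k).im = 0 := by rw [← hM.coe_re_apply_self]; simp
  fin_cases i <;> fin_cases j
  · exact hdiag 0
  · exact h01
  · simp [← hM.apply 1 0, h01]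
  · exact hdiag 1

/-- For any two Hermitian 2×2 complex matrices `A`, `B` there is a
2×2 unitary `U` such that `U*AU` and `U*BU` have all real entries. -/
theorem exists_unitary_real_entries (A B : Matrix (Fin 2) (Fin 2) ℂ)
    (hA : A.IsHermitian) (hB : B.IsHermitian) :
    ∃ U : Matrix (Fin 2) (Fin 2) ℂ, U ∈ Matrix.unitaryGroup (Fin 2) ℂ ∧
      (∀ i j, ((Uᴴ * A * U) i j).im = 0) ∧ (∀ i j, ((Uᴴ * B * U) i j).im = 0) := by
  obtain ⟨V, hV, hVA⟩ := hA.exists_unitary_conjTranspose_mul_mul_eq_diagonal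
  obtain ⟨c, hc, hBc⟩ := exists_mem_unitary_im_mul_eq_zero ((Vᴴ * B * V) 0 1)
  set D := diagonal ![1, c]
  have hD : D ∈ unitaryGroup (Fin 2) ℂ :=
    diagonal_mem_unitaryGroup fun i => by fin_cases i; exacts [one_mem _, hc]
  have hconj (M : Matrix (Fin 2) (Fin 2) ℂ) :
      (V * D)ᴴ * M * (V * D) = Dᴴ * (Vᴴ * M * V) * D := by
    simp only [conjTranspose_mul, Matrix.mul_assoc]
  refine ⟨V * D, mul_mem hV hD, ?_, ?_⟩
  · refine (isHermitian_conjTranspose_mul_mul _ hA).im_apply_eq_zero_of_im_apply_zero_one ?_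
    rw [hconj, conjTranspose_diagonal_mul_mul_diagonal_apply, hVA]
    simp
  · refine (isHermitian_conjTranspose_mul_mul _ hB).im_apply_eq_zero_of_im_apply_zero_one ?_
    rw [hconj, conjTranspose_diagonal_mul_mul_diagonal_apply]
    simpa using hBc
end

section
/- Fix a strictly positive d×d density matrix ρ, Hermitian matrices L₁,…,Lₙ with Tr(ρLᵢ) = 0 whose Gram matrix G = [Re Tr(ρLᵢLⱼ)] is invertible with inverse [g^{ij}], and reals t₀ ∈ ℝ, c = (c₁,…,cₙ) ∈ ℝⁿ. Then: (a) for every finite set Ω, POVM (π_ω)_{ω∈Ω} and function g : Ω → ℝ such that A := Σ_ω g(ω)π_ω satisfies Tr(ρA) = t₀ and Re Tr(ρLᵢA) = cᵢ for all i, one has Σ_ω (g(ω) − t₀)² Tr(ρπ_ω) ≥ cᵀG⁻¹c; (b) the Hermitian matrix F := t₀·I + Σ_{i,j} cᵢ g^{ij} Lⱼ satisfies Tr(ρF) = t₀, Re Tr(ρLᵢF) = cᵢ for all i, and Tr(ρ(F − t₀·I)²) = cᵀG⁻¹c, so the spectral measure of F (with the eigenvalues as estimates) attains the lower bound. Hence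 the minimum of the mean squared error over all locally unbiased estimators of a scalar function equals cᵀG⁻¹c. -/
/-!
With the SLD gradient `X = ∑ cᵢ gⁱʲ Lⱼ`, local unbiasedness and `Tr(ρ Lᵢ) = 0` give
`Re Tr(ρ X ∑ (g ω - t₀) π ω) = cᵀG⁻¹c = Tr(ρ X²)`. Completing the square,
the mean squared error minus `cᵀG⁻¹c` is `∑ Re Tr(ρ Y π ω Y)` with `Y = (g ω - t₀) I - X`,
and each term is nonnegative. The spectral POVM of `F = t₀ I + X`, with the eigenvalues as
estimates, turns `∑ (λₖ - t₀)² πₖ` into `(F - t₀ I)² = X²`, so it attains the bound.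
-/

open Matrix
open scoped ComplexOrder

noncomputable section

def IsPOVM {d : ℕ} {Ω : Type} [Fintype Ω] (π : Ω → Matrix (Fin d) (Fin d) ℂ) : Prop :=
  (∀ ω, (π ω).PosSemidef) ∧ ∑ ω, π ω = 1

namespace Matrix

variable {m ι Ω : Type*} [Fintype m] [Fintype ι] [Fintype Ω]

lemma PosSemidef.trace_mul_nonneg [DecidableEq m] {P Q : Matrix m m ℂ} (hP : P.PosSemidef)
    (hQ : Q.PosSemidef) : 0 ≤ (P * Q).trace := by
  open scoped MatrixOrder in
  obtain ⟨B, rfl⟩ := CStarAlgebra.nonneg_iff_eq_star_mul_self.mp hP.nonneg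
  rw [Matrix.mul_assoc, trace_mul_comm]
  exact (hQ.mul_mul_conjTranspose_same B).trace_nonneg

lemma PosSemidef.re_trace_mul_mul_mul_nonneg [DecidableEq m] {ρ π Y : Matrix m m ℂ}
    (hρ : ρ.PosSemidef) (hπ : π.PosSemidef) (hY : Y.IsHermitian) :
    0 ≤ (ρ * Y * π * Y).trace.re := by
  have h : (ρ * Y * π * Y).trace = (Y * ρ * Yᴴ * π).trace := by
    rw [hY.eq, trace_mul_comm, ← Matrix.mul_assoc, ← Matrix.mul_assoc]
  rw [h]
  exact Complex.nonneg_iff.mp ((hρ.mul_mul_conjTranspose_same Y).trace_mul_nonneg hπ) |>.1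

lemma IsHermitian.re_trace_mul_mul_comm {A B C : Matrix m m ℂ} (hA : A.IsHermitian)
    (hB : B.IsHermitian) (hC : C.IsHermitian) : (A * B * C).trace.re = (A * C * B).trace.re := by
  rw [← Complex.conj_re, ← Complex.star_def, ← trace_conjTranspose]
  simp only [conjTranspose_mul, hA.eq, hB.eq, hC.eq]
  rw [← Matrix.mul_assoc, trace_mul_cycle, Matrix.mul_assoc]

lemma IsHermitian.ofReal_re_trace_mul_mul_self {ρ X : Matrix m m ℂ} (hρ : ρ.IsHermitian)
    (hX : X.IsHermitian) : (((ρ * X * X).trace.re : ℝ) : ℂ) = (ρ * X * X).trace := by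
  rw [← Complex.conj_eq_iff_re, ← Complex.star_def, ← trace_conjTranspose]
  simp only [conjTranspose_mul, hρ.eq, hX.eq]
  rw [← Matrix.mul_assoc, trace_mul_cycle]

lemma trace_mul_sum_smul (M : Matrix m m ℂ) (a : ι → ℝ) (N : ι → Matrix m m ℂ) :
    (M * ∑ i, a i • N i).trace = ∑ i, (a i : ℂ) * (M * N i).trace := by
  simp [Matrix.mul_sum, trace_sum, Complex.real_smul]

lemma re_trace_mul_sum_smul (M : Matrix m m ℂ) (a : ι → ℝ) (N : ι → Matrix m m ℂ) :
    (M * ∑ i, a i • N i).trace.re = ∑ i, a i * (M * N i).trace.re := by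
  simp [trace_mul_sum_smul]

lemma re_trace_mul_sum_smul_mul (M P : Matrix m m ℂ) (a : ι → ℝ) (N : ι → Matrix m m ℂ) :
    (M * (∑ i, a i • N i) * P).trace.re = ∑ i, a i * (M * N i * P).trace.re := by
  simp [Matrix.mul_sum, Matrix.sum_mul, trace_sum, Complex.real_smul]

lemma PosSemidef.two_mul_re_trace_le [DecidableEq m] {ρ π X : Matrix m m ℂ} (hρ : ρ.PosSemidef)
    (hπ : π.PosSemidef) (hX : X.IsHermitian) (s : ℝ) :
    2 * s * (ρ * X * π).trace.re ≤ s ^ 2 * (ρ * π).trace.re + (ρ * X * π * X).trace.re := by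
  have hY : (s • 1 - X).IsHermitian := ((isHermitian_one).smul (IsSelfAdjoint.all s)).sub hX
  have h := hρ.re_trace_mul_mul_mul_nonneg hπ hY
  have hcomm := hρ.isHermitian.re_trace_mul_mul_comm hπ.isHermitian hX
  simp only [Matrix.mul_sub, Matrix.sub_mul, Matrix.mul_smul, Matrix.smul_mul, Matrix.mul_one,
    trace_sub, trace_smul, Complex.sub_re, Complex.real_smul, Complex.re_ofReal_mul, hcomm] at h
  linarith

lemma PosSemidef.two_mul_re_trace_sum_le [DecidableEq m] {ρ X : Matrix m m ℂ}
    {π : Ω → Matrix m m ℂ} (hρ : ρ.PosSemidef) (hπ : ∀ ω, (π ω).PosSemidef)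
    (hπ1 : ∑ ω, π ω = 1) (hX : X.IsHermitian) (s : Ω → ℝ) :
    2 * (ρ * X * ∑ ω, s ω • π ω).trace.re - (ρ * X * X).trace.re ≤
      ∑ ω, s ω ^ 2 * (ρ * π ω).trace.re := by
  have hXX : (ρ * X * X).trace.re = ∑ ω, (ρ * X * π ω * X).trace.re := by
    rw [← Complex.re_sum, ← trace_sum, ← Finset.sum_mul, ← Matrix.mul_sum, hπ1, Matrix.mul_one]
  rw [hXX, re_trace_mul_sum_smul, Finset.mul_sum, ← Finset.sum_sub_distrib]
  refine Finset.sum_le_sum fun ω _ => ?_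
  have := hρ.two_mul_re_trace_le (hπ ω) hX (s ω)
  linarith

lemma IsHermitian.exists_posSemidef_sum_smul_eq_cfc [DecidableEq m] {A : Matrix m m ℂ}
    (hA : A.IsHermitian) :
    ∃ π : m → Matrix m m ℂ, (∀ k, (π k).PosSemidef) ∧
      ∀ f : ℝ → ℝ, ∑ k, f (hA.eigenvalues k) • π k = cfc f A := by
  set U := hA.eigenvectorUnitary
  refine ⟨fun k => Unitary.conjStarAlgAut ℂ _ U (diagonal (Pi.single k 1)), fun k => ?_,
    fun f => ?_⟩
  · have hdiag : (diagonal (Pi.single k (1 : ℂ))).PosSemidef :=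
      posSemidef_diagonal_iff.mpr fun i => by by_cases h : i = k <;> simp [h]
    exact hdiag.mul_mul_conjTranspose_same (U : Matrix m m ℂ)
  · rw [hA.cfc_eq, IsHermitian.cfc]
    simp_rw [RCLike.real_smul_eq_coe_smul (K := ℂ), ← map_smul, ← map_sum]
    congr 1
    ext i j
    by_cases h : i = j <;> simp [Matrix.sum_apply, Pi.single_apply, h]

lemma IsHermitian.exists_posSemidef_sum_smul_eq_self [DecidableEq m] {F : Matrix m m ℂ}
    (hF : F.IsHermitian) (ρ : Matrix m m ℂ) (t₀ : ℝ) :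
    ∃ π : m → Matrix m m ℂ, (∀ k, (π k).PosSemidef) ∧ ∑ k, π k = 1 ∧
      ∑ k, hF.eigenvalues k • π k = F ∧
      ∑ k, (hF.eigenvalues k - t₀) ^ 2 * (ρ * π k).trace.re =
        (ρ * (F - t₀ • 1) * (F - t₀ • 1)).trace.re := by
  obtain ⟨π, hπ, hcfc⟩ := hF.exists_posSemidef_sum_smul_eq_cfc
  have hF' : IsSelfAdjoint F := hF
  refine ⟨π, hπ, by simpa using (hcfc 1).trans (cfc_one ℝ F), (hcfc id).trans (cfc_id ℝ F), ?_⟩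
  rw [← re_trace_mul_sum_smul, hcfc fun x => (x - t₀) ^ 2, cfc_pow (fun x => x - t₀) 2 F,
    cfc_sub _ _ F, cfc_id' ℝ F, cfc_const t₀ F, Algebra.algebraMap_eq_smul_one, sq,
    Matrix.mul_assoc]

end Matrix

section SLDGradient

variable {m ι : Type*} [Fintype ι] [DecidableEq ι]
  {L : ι → Matrix m m ℂ} {G : Matrix ι ι ℝ} {c : ι → ℝ}

variable (L G c) in
def sldGradient : Matrix m m ℂ := ∑ i, ∑ j, (c i * G⁻¹ i j) • L j

lemma sldGradient_eq_sum_smul : sldGradient L G c = ∑ j, (c ᵥ* G⁻¹) j • L j := by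
  simp only [sldGradient, vecMul, dotProduct, Finset.sum_smul, mul_smul]
  exact Finset.sum_comm

lemma isHermitian_sldGradient (hL : ∀ i, (L i).IsHermitian) :
    (sldGradient L G c).IsHermitian := by
  rw [sldGradient_eq_sum_smul]
  exact isSelfAdjoint_sum _ fun j _ => (hL j).smul (IsSelfAdjoint.all _)

variable [Fintype m] {ρ : Matrix m m ℂ}

lemma trace_mul_sldGradient (hL0 : ∀ i, (ρ * L i).trace = 0) :
    (ρ * sldGradient L G c).trace = 0 := by
  simp [sldGradient_eq_sum_smul, trace_mul_sum_smul, hL0]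

lemma re_trace_mul_sldGradient_mul {M : Matrix m m ℂ} (hM : ∀ j, (ρ * L j * M).trace.re = c j) :
    (ρ * sldGradient L G c * M).trace.re = c ⬝ᵥ G⁻¹ *ᵥ c := by
  simp only [sldGradient_eq_sum_smul, re_trace_mul_sum_smul_mul, hM, dotProduct_mulVec]
  rfl

lemma re_trace_mul_mul_sldGradient (hρ : ρ.IsHermitian) (hL : ∀ i, (L i).IsHermitian)
    (hG : ∀ i j, G i j = (ρ * L i * L j).trace.re) (hGinv : IsUnit G.det) (i : ι) :
    (ρ * L i * sldGradient L G c).trace.re = c i := by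
  rw [hρ.re_trace_mul_mul_comm (hL i) (isHermitian_sldGradient hL), sldGradient_eq_sum_smul,
    re_trace_mul_sum_smul_mul]
  simp only [← hG]
  change ((c ᵥ* G⁻¹) ᵥ* G) i = c i
  rw [vecMul_vecMul, nonsing_inv_mul _ hGinv, vecMul_one]

lemma trace_mul_sldGradient_mul_self (hρ : ρ.IsHermitian) (hL : ∀ i, (L i).IsHermitian)
    (hG : ∀ i j, G i j = (ρ * L i * L j).trace.re) (hGinv : IsUnit G.det) :
    (ρ * sldGradient L G c * sldGradient L G c).trace = ((c ⬝ᵥ G⁻¹ *ᵥ c : ℝ) : ℂ) := by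
  rw [← hρ.ofReal_re_trace_mul_mul_self (isHermitian_sldGradient hL),
    re_trace_mul_sldGradient_mul (re_trace_mul_mul_sldGradient hρ hL hG hGinv)]

theorem sld_cramerRao_bound {Ω : Type*} [Fintype Ω] [DecidableEq m] (hρ : ρ.PosSemidef)
    (hL : ∀ i, (L i).IsHermitian) (hL0 : ∀ i, (ρ * L i).trace = 0)
    (hG : ∀ i j, G i j = (ρ * L i * L j).trace.re) (hGinv : IsUnit G.det)
    {π : Ω → Matrix m m ℂ} (hπ : ∀ ω, (π ω).PosSemidef) (hπ1 : ∑ ω, π ω = 1) (g : Ω → ℝ) (t₀ : ℝ)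
    (hunbiased : ∀ i, (ρ * L i * ∑ ω, g ω • π ω).trace.re = c i) :
    c ⬝ᵥ G⁻¹ *ᵥ c ≤ ∑ ω, (g ω - t₀) ^ 2 * (ρ * π ω).trace.re := by
  set X := sldGradient L G c
  have hX : X.IsHermitian := isHermitian_sldGradient hL
  have hshift : ∑ ω, (g ω - t₀) • π ω = ∑ ω, g ω • π ω - t₀ • 1 := by
    simp only [sub_smul, Finset.sum_sub_distrib, ← Finset.smul_sum, hπ1]
  have hcross : (ρ * X * ∑ ω, (g ω - t₀) • π ω).trace.re = c ⬝ᵥ G⁻¹ *ᵥ c := by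
    rw [hshift, Matrix.mul_sub, trace_sub, Complex.sub_re, Matrix.mul_smul, Matrix.mul_one,
      trace_smul, trace_mul_sldGradient hL0, smul_zero, Complex.zero_re, sub_zero]
    exact re_trace_mul_sldGradient_mul hunbiased
  have hsquare : (ρ * X * X).trace.re = c ⬝ᵥ G⁻¹ *ᵥ c := by
    rw [trace_mul_sldGradient_mul_self hρ.isHermitian hL hG hGinv, Complex.ofReal_re]
  have := hρ.two_mul_re_trace_sum_le hπ hπ1 hX (fun ω => g ω - t₀)
  linarith

end SLDGradient

/-- The scalar estimation bound at a point: (a) every locally unbiased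
finite-outcome estimator of a scalar has mean squared error at least `cᵀG⁻¹c`;
(b) the observable `F = t₀I + Σ cᵢ gⁱʲ Lⱼ` is locally unbiased and attains it;
hence `cᵀG⁻¹c` is the minimum mean squared error. -/
theorem scalar_estimation_bound (d n : ℕ)
    (ρ : Matrix (Fin d) (Fin d) ℂ) (hρ : ρ.PosDef) (htr : ρ.trace = 1)
    (L : Fin n → Matrix (Fin d) (Fin d) ℂ) (hL : ∀ i, (L i).IsHermitian)
    (hL0 : ∀ i, (ρ * L i).trace = 0)
    (G : Matrix (Fin n) (Fin n) ℝ)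
    (hG : ∀ i j, G i j = (Matrix.trace (ρ * L i * L j)).re)
    (hGinv : IsUnit G.det)
    (t₀ : ℝ) (c : Fin n → ℝ) :
    (∀ (Ω : Type) (_ : Fintype Ω) (π : Ω → Matrix (Fin d) (Fin d) ℂ) (g : Ω → ℝ),
      IsPOVM π →
      Matrix.trace (ρ * ∑ ω, g ω • π ω) = (t₀ : ℂ) →
      (∀ i, (Matrix.trace (ρ * L i * ∑ ω, g ω • π ω)).re = c i) →
      c ⬝ᵥ G⁻¹.mulVec c ≤ ∑ ω, (g ω - t₀)^2 * (Matrix.trace (ρ * π ω)).re) ∧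
    ((t₀ • (1 : Matrix (Fin d) (Fin d) ℂ) + ∑ i, ∑ j, (c i * G⁻¹ i j) • L j).IsHermitian ∧
      Matrix.trace (ρ * (t₀ • (1 : Matrix (Fin d) (Fin d) ℂ) +
        ∑ i, ∑ j, (c i * G⁻¹ i j) • L j)) = (t₀ : ℂ) ∧
      (∀ i, (Matrix.trace (ρ * L i * (t₀ • (1 : Matrix (Fin d) (Fin d) ℂ) +
        ∑ i', ∑ j, (c i' * G⁻¹ i' j) • L j))).re = c i) ∧
      Matrix.trace (ρ * (∑ i, ∑ j, (c i * G⁻¹ i j) • L j) *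
        (∑ i, ∑ j, (c i * G⁻¹ i j) • L j)) = ((c ⬝ᵥ G⁻¹.mulVec c : ℝ) : ℂ)) ∧
    IsLeast {x : ℝ | ∃ (Ω : Type) (_ : Fintype Ω)
        (π : Ω → Matrix (Fin d) (Fin d) ℂ) (g : Ω → ℝ),
        IsPOVM π ∧
        Matrix.trace (ρ * ∑ ω, g ω • π ω) = (t₀ : ℂ) ∧
        (∀ i, (Matrix.trace (ρ * L i * ∑ ω, g ω • π ω)).re = c i) ∧
        x = ∑ ω, (g ω - t₀)^2 * (Matrix.trace (ρ * π ω)).re}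
      (c ⬝ᵥ G⁻¹.mulVec c) := by
  rw [show ∑ i, ∑ j, (c i * G⁻¹ i j) • L j = sldGradient L G c from rfl]
  set X := sldGradient L G c
  have hX : X.IsHermitian := isHermitian_sldGradient hL
  have hF : (t₀ • (1 : Matrix (Fin d) (Fin d) ℂ) + X).IsHermitian :=
    (isHermitian_one.smul (IsSelfAdjoint.all t₀)).add hX
  have hρX : (ρ * X).trace = 0 := trace_mul_sldGradient hL0
  have hLX : ∀ i, (ρ * L i * X).trace.re = c i :=
    re_trace_mul_mul_sldGradient hρ.isHermitian hL hG hGinv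
  have htrF : (ρ * (t₀ • 1 + X)).trace = t₀ := by simp [Matrix.mul_add, hρX, htr]
  have hLF : ∀ i, (ρ * L i * (t₀ • 1 + X)).trace.re = c i := by simp [Matrix.mul_add, hL0, hLX]
  have hXX := trace_mul_sldGradient_mul_self (c := c) hρ.isHermitian hL hG hGinv
  obtain ⟨π, hπ, hπ1, hspec, hmse⟩ := hF.exists_posSemidef_sum_smul_eq_self ρ t₀
  rw [add_sub_cancel_left, hXX, Complex.ofReal_re] at hmse
  have hbound : ∀ (Ω : Type) (_ : Fintype Ω) (π : Ω → Matrix (Fin d) (Fin d) ℂ) (g : Ω → ℝ),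
      IsPOVM π → (∀ i, (ρ * L i * ∑ ω, g ω • π ω).trace.re = c i) →
      c ⬝ᵥ G⁻¹ *ᵥ c ≤ ∑ ω, (g ω - t₀) ^ 2 * (ρ * π ω).trace.re :=
    fun _ _ _ g hπ h => sld_cramerRao_bound hρ.posSemidef hL hL0 hG hGinv hπ.1 hπ.2 g t₀ h
  refine ⟨fun Ω _ π g hπ _ h => hbound Ω _ π g hπ h, ⟨hF, htrF, hLF, hXX⟩,
    ⟨⟨Fin d, inferInstance, π, hF.eigenvalues, ⟨hπ, hπ1⟩, by rw [hspec]; exact htrF,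
      by rw [hspec]; exact hLF, hmse.symm⟩, ?_⟩⟩
  rintro x ⟨Ω, _, π, g, hπ, -, h, rfl⟩
  exact hbound Ω _ π g hπ h
end
end
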